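/- Let h : G ↷ H be an actor between étale groupoids and let U ⊆ G, V ⊆ H be open bisections. Then the action multiplication restricts to a homeomorphism from the fibred product U ×_{s,ρ} V onto U·V. -/

import Mathlib

open Topology

/-- A topological groupoid: a set with a partially defined multiplication
(`D a b` expresses composability), an inversion, satisfying the groupoid
axioms, such that inversion is continuous and multiplication is continuous
on the set of composable pairs. -/
structure TopGroupoid (G : Type*) [TopologicalSpace G] where
  /-- composability -/
  D : G → G → Prop
  /-- partially defined multiplication (junk values off `D`) -/
  comp : G → G → G
  /-- inversion -/
  inv : G → G
  inv_inv : ∀ g, inv (inv g) = g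
  d_inv : ∀ g, D g (inv g)
  d_eq : ∀ a b, D a b ↔ comp (inv a) a = comp b (inv b)
  d_comp_left : ∀ {a b c}, D a b → D b c → D (comp a b) c
  d_comp_right : ∀ {a b c}, D a b → D b c → D a (comp b c)
  assoc : ∀ {a b c}, D a b → D b c → comp (comp a b) c = comp a (comp b c)
  cancel_left : ∀ {g h}, D g h → comp (inv g) (comp g h) = h
  cancel_right : ∀ {g h}, D g h → comp (comp g h) (inv h) = g
  continuous_inv : Continuous inv
  continuousOn_comp : ContinuousOn (fun p : G × G => comp p.1 p.2) {p | D p.1 p.2}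

namespace TopGroupoid

variable {G : Type*} [TopologicalSpace G]

/-- The source map `s(γ) = γ⁻¹γ`. -/
def src (S : TopGroupoid G) (g : G) : G := S.comp (S.inv g) g

/-- The range map `r(γ) = γγ⁻¹`. -/
def rng (S : TopGroupoid G) (g : G) : G := S.comp g (S.inv g)

/-- The unit space `G⁽⁰⁾ = {γ⁻¹γ : γ ∈ G}`. -/
def unitSpace (S : TopGroupoid G) : Set G := Set.range S.src

/-- A groupoid is étale if its range map is a local homeomorphism. -/
def IsEtale (S : TopGroupoid G) : Prop := IsLocalHomeomorph S.rng

/-- An open bisection: an open set on which both the source and the range map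
are injective (hence, in an étale groupoid, restrict to homeomorphisms onto
their open images). -/
def IsOpenBisection (S : TopGroupoid G) (U : Set G) : Prop :=
  IsOpen U ∧ Set.InjOn S.src U ∧ Set.InjOn S.rng U

/-- Pointwise product of subsets: `U·V = {γη : γ ∈ U, η ∈ V, s γ = r η}`. -/
def setMul (S : TopGroupoid G) (U V : Set G) : Set G :=
  {g | ∃ a ∈ U, ∃ b ∈ V, S.D a b ∧ g = S.comp a b}

/-- Pointwise inverse of a subset: `U⁻¹ = {γ⁻¹ : γ ∈ U}`. -/
def setInv (S : TopGroupoid G) (U : Set G) : Set G := S.inv '' U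

end TopGroupoid

/-- An actor `G ↷ H`: a continuous left action of `G` on `H` (with anchor map
`ρ : H → G⁽⁰⁾`) which commutes with the right multiplication of `H` on itself. -/
structure Actor {G : Type*} {H : Type*} [TopologicalSpace G] [TopologicalSpace H]
    (S : TopGroupoid G) (T : TopGroupoid H) where
  /-- the anchor map -/
  rho : H → G
  /-- the action multiplication, partially defined (junk off `s γ = ρ x`) -/
  act : G → H → H
  rho_mem : ∀ x, rho x ∈ S.unitSpace
  continuous_rho : Continuous rho
  continuousOn_act :
    ContinuousOn (fun p : G × H => act p.1 p.2) {p | S.src p.1 = rho p.2}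
  rho_act : ∀ {γ x}, S.src γ = rho x → rho (act γ x) = S.rng γ
  act_assoc : ∀ {γ₁ γ₂ x}, S.D γ₁ γ₂ → S.src γ₂ = rho x →
      act γ₁ (act γ₂ x) = act (S.comp γ₁ γ₂) x
  act_unit : ∀ x, act (rho x) x = x
  rho_comp : ∀ {x y}, T.D x y → rho (T.comp x y) = rho x
  src_act : ∀ {γ x}, S.src γ = rho x → T.src (act γ x) = T.src x
  act_right : ∀ {γ x y}, S.src γ = rho x → T.D x y →
      act γ (T.comp x y) = T.comp (act γ x) y

namespace Actor

variable {G H : Type*} [TopologicalSpace G] [TopologicalSpace H]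
variable {S : TopGroupoid G} {T : TopGroupoid H}

/-- An actor is free if the only arrows fixing a unit are units. -/
def Free (A : Actor S T) : Prop :=
  ∀ t ∈ T.unitSpace, ∀ γ : G, S.src γ = A.rho t → A.act γ t = t → γ ∈ S.unitSpace

/-- An actor is proper if the anchor map restricted to the unit space of `H`
is a proper map. -/
def Proper (A : Actor S T) : Prop := IsProperMap (T.unitSpace.restrict A.rho)

/-- `U·V = {γ·x : γ ∈ U, x ∈ V, s γ = ρ x}`. -/
def actSet (A : Actor S T) (U : Set G) (V : Set H) : Set H :=
  {y | ∃ γ ∈ U, ∃ x ∈ V, S.src γ = A.rho x ∧ y = A.act γ x}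

end Actor

/-!
Injectivity: the range map recovers `γ` from `ρ(γ·x) = r(γ)` and the source map recovers `x`
from `s(γ·x) = s(x)`, and both are injective on bisections. Openness: near `y₀ = γ₀·x₀`, étaleness
gives a continuous local section `σ` of the range map through `γ₀`, and every `y` close to `y₀`
factors continuously as `y = σ(ρ y) · (σ(ρ y)⁻¹ · y)`, so small neighbourhoods of `γ₀` and `x₀`
act onto a neighbourhood of `y₀`.
-/

open Set

lemma IsLocalHomeomorph.exists_local_section {X Y : Type*} [TopologicalSpace X]
    [TopologicalSpace Y] {f : X → Y} (hf : IsLocalHomeomorph f) {U : Set X} (hU : IsOpen U)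
    {x : X} (hx : x ∈ U) :
    ∃ M : Set Y, ∃ σ : Y → X, IsOpen M ∧ f x ∈ M ∧ ContinuousOn σ M ∧ MapsTo σ M U ∧
      (∀ y ∈ M, f (σ y) = y) ∧ σ (f x) = x := by
  obtain ⟨φ, hxφ, rfl⟩ := hf x
  refine ⟨φ '' (φ.source ∩ U), φ.symm, φ.isOpen_image_source_inter hU, ⟨x, ⟨hxφ, hx⟩, rfl⟩,
    φ.continuousOn_symm.mono ?_, ?_, ?_, φ.left_inv hxφ⟩
  · exact image_subset_iff.mpr fun x' hx' => φ.map_source hx'.1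
  · rintro _ ⟨x', hx', rfl⟩
    simpa only [φ.left_inv hx'.1] using hx'.2
  · rintro _ ⟨x', hx', rfl⟩
    rw [φ.left_inv hx'.1]

namespace TopGroupoid

variable {G : Type*} [TopologicalSpace G] (S : TopGroupoid G)

lemma src_inv (g : G) : S.src (S.inv g) = S.rng g := by
  rw [src, rng, S.inv_inv]

lemma rng_inv (g : G) : S.rng (S.inv g) = S.src g := by
  rw [src, rng, S.inv_inv]

lemma d_inv_left (g : G) : S.D (S.inv g) g := by
  simpa only [S.inv_inv] using S.d_inv (S.inv g)

end TopGroupoid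

namespace Actor

variable {G H : Type*} [TopologicalSpace G] [TopologicalSpace H]
variable {S : TopGroupoid G} {T : TopGroupoid H} (A : Actor S T)

lemma act_act_inv {γ : G} {y : H} (h : S.rng γ = A.rho y) :
    A.act γ (A.act (S.inv γ) y) = y := by
  rw [A.act_assoc (S.d_inv γ) (by rwa [S.src_inv])]
  change A.act (S.rng γ) y = y
  rw [h, A.act_unit]

lemma act_inv_act {γ : G} {x : H} (h : S.src γ = A.rho x) :
    A.act (S.inv γ) (A.act γ x) = x := by
  rw [A.act_assoc (S.d_inv_left γ) h]
  change A.act (S.src γ) x = x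
  rw [h, A.act_unit]

/-- The fibred product `U ×_{s,ρ} V`. -/
def fiberProd (U : Set G) (V : Set H) : Set (G × H) :=
  {p | p.1 ∈ U ∧ p.2 ∈ V ∧ S.src p.1 = A.rho p.2}

def actOn (U : Set G) (V : Set H) (p : A.fiberProd U V) : H :=
  A.act p.1.1 p.1.2

lemma continuous_actOn (U : Set G) (V : Set H) : Continuous (A.actOn U V) :=
  A.continuousOn_act.comp_continuous continuous_subtype_val fun p => p.2.2.2

lemma range_actOn (U : Set G) (V : Set H) : range (A.actOn U V) = A.actSet U V := by
  ext y
  constructor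
  · rintro ⟨⟨⟨γ, x⟩, hγ, hx, h⟩, rfl⟩
    exact ⟨γ, hγ, x, hx, h, rfl⟩
  · rintro ⟨γ, hγ, x, hx, h, rfl⟩
    exact ⟨⟨(γ, x), hγ, hx, h⟩, rfl⟩

variable {A}

lemma injective_actOn {U : Set G} {V : Set H} (hU : InjOn S.rng U) (hV : InjOn T.src V) :
    Function.Injective (A.actOn U V) := by
  rintro ⟨⟨γ, x⟩, hγ, hx, h⟩ ⟨⟨γ', x'⟩, hγ', hx', h'⟩ hact
  change A.act γ x = A.act γ' x' at hact
  have hγγ' : γ = γ' := hU hγ hγ' (by rw [← A.rho_act h, ← A.rho_act h', hact])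
  have hxx' : x = x' := hV hx hx' (by rw [← A.src_act h, ← A.src_act h', hact])
  subst hγγ' hxx'
  rfl

lemma isOpen_actSet (hS : S.IsEtale) {U : Set G} {V : Set H} (hU : IsOpen U) (hV : IsOpen V) :
    IsOpen (A.actSet U V) := by
  refine isOpen_iff_forall_mem_open.mpr ?_
  rintro _ ⟨γ₀, hγ₀, x₀, hx₀, h₀, rfl⟩
  obtain ⟨M, σ, hM, hγ₀M, hσ, hσU, hσrng, hσγ₀⟩ :=
    IsLocalHomeomorph.exists_local_section hS hU hγ₀
  set c : H → H := fun y => A.act (S.inv (σ (A.rho y))) y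
  have hc_src : ∀ y ∈ A.rho ⁻¹' M, S.src (S.inv (σ (A.rho y))) = A.rho y := fun y hy => by
    rw [S.src_inv, hσrng _ hy]
  have hc : ContinuousOn c (A.rho ⁻¹' M) := by
    refine A.continuousOn_act.comp (ContinuousOn.prodMk ?_ continuousOn_id) hc_src
    exact S.continuous_inv.comp_continuousOn
      (hσ.comp A.continuous_rho.continuousOn fun _ hy => hy)
  have hρ₀ : A.rho (A.act γ₀ x₀) = S.rng γ₀ := A.rho_act h₀
  refine ⟨A.rho ⁻¹' M ∩ c ⁻¹' V, ?_, hc.isOpen_inter_preimage (hM.preimage A.continuous_rho) hV,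
    by rwa [mem_preimage, hρ₀], ?_⟩
  · rintro y ⟨hyM, hyV⟩
    refine ⟨σ (A.rho y), hσU hyM, c y, hyV, ?_, (A.act_act_inv (hσrng _ hyM)).symm⟩
    rw [A.rho_act (hc_src y hyM), S.rng_inv]
  · simpa only [c, mem_preimage, hρ₀, hσγ₀, A.act_inv_act h₀] using hx₀

lemma isOpenMap_actOn (hS : S.IsEtale) {U : Set G} {V : Set H} (hU : IsOpen U) (hV : IsOpen V) :
    IsOpenMap (A.actOn U V) := by
  rintro _ ⟨W, hW, rfl⟩
  refine isOpen_iff_forall_mem_open.mpr ?_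
  rintro _ ⟨⟨⟨γ, x⟩, hγ, hx, h⟩, hW', rfl⟩
  obtain ⟨P, Q, hP, hQ, hγP, hxQ, hPQ⟩ := isOpen_prod_iff.mp hW γ x hW'
  refine ⟨A.actSet (U ∩ P) (V ∩ Q), ?_, isOpen_actSet hS (hU.inter hP) (hV.inter hQ),
    ⟨γ, ⟨hγ, hγP⟩, x, ⟨hx, hxQ⟩, h, rfl⟩⟩
  rintro _ ⟨γ', hγ', x', hx', h', rfl⟩
  exact ⟨⟨(γ', x'), hγ'.1, hx'.1, h'⟩, hPQ (mk_mem_prod hγ'.2 hx'.2), rfl⟩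

end Actor

theorem actor_mul_restrict_homeo_general {G H : Type*} [TopologicalSpace G] [TopologicalSpace H]
    {S : TopGroupoid G} {T : TopGroupoid H} (hS : S.IsEtale)
    (A : Actor S T) (U : Set G) (V : Set H)
    (hU : S.IsOpenBisection U) (hV : T.IsOpenBisection V) :
    Topology.IsOpenEmbedding
      (fun p : {p : G × H // p.1 ∈ U ∧ p.2 ∈ V ∧ S.src p.1 = A.rho p.2} =>
        A.act p.1.1 p.1.2) ∧
    Set.range
      (fun p : {p : G × H // p.1 ∈ U ∧ p.2 ∈ V ∧ S.src p.1 = A.rho p.2} =>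
        A.act p.1.1 p.1.2) = A.actSet U V :=
  ⟨.of_continuous_injective_isOpenMap (A.continuous_actOn U V)
    (Actor.injective_actOn hU.2.2 hV.2.1) (Actor.isOpenMap_actOn hS hU.1 hV.1),
   A.range_actOn U V⟩

/-- For an actor `h : G ↷ H` between étale groupoids and open bisections
`U ⊆ G`, `V ⊆ H`, the action multiplication restricts to a homeomorphism from
the fibred product `U ×_{s,ρ} V` onto `U·V`: it is an open embedding with range
exactly `U·V`. -/
theorem actor_mul_restrict_homeo {G H : Type*} [TopologicalSpace G] [TopologicalSpace H]
    {S : TopGroupoid G} {T : TopGroupoid H} (hS : S.IsEtale) (hT : T.IsEtale)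
    (A : Actor S T) (U : Set G) (V : Set H)
    (hU : S.IsOpenBisection U) (hV : T.IsOpenBisection V) :
    Topology.IsOpenEmbedding
      (fun p : {p : G × H // p.1 ∈ U ∧ p.2 ∈ V ∧ S.src p.1 = A.rho p.2} =>
        A.act p.1.1 p.1.2) ∧
    Set.range
      (fun p : {p : G × H // p.1 ∈ U ∧ p.2 ∈ V ∧ S.src p.1 = A.rho p.2} =>
        A.act p.1.1 p.1.2) = A.actSet U V :=
  actor_mul_restrict_homeo_general hS A U V hU hV
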